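/- arXiv:1807.00520 — 2 statements merged into one kernel-verified Lean document; each statement's English description precedes it below -/
import Mathlib

section
/- Let g(x) = x₁·x₂·⋯·x_d, expressed on the unit sphere in the spherical coordinates v₁ = cos φ₁, v₂ = sin φ₁ cos φ₂, …, v_{d−1} = sin φ₁ ⋯ sin φ_{d−2} cos φ_{d−1}, v_d = sin φ₁ ⋯ sin φ_{d−2} sin φ_{d−1}, so that g(φ) = sin^{d−1}φ₁ ⋯ sin φ_{d−1} · cos φ₁ ⋯ cos φ_{d−1}. Then at every maximizing angle φ of g(φ) (i.e. with g(φ) = d^{−d/2}) the Hessian satisfies ∂²g/∂φ_i² (φ) = −2(d−i+1)/d^{d/2} for i = 1,…,d−1 and ∂²g/∂φ_i∂φ_j (φ) = 0 for i ≠ j, so that |det g''(φ)| = 2^{d−1} · d! / d^{d(d−1)/2} > 0. -/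
/-!
Write `f_k(t) = sin t ^ k * cos t`, so that `g(φ) = ∏ᵢ f_{d-1-i}(φᵢ)`. With `s = sin² t`,
`f_k(t)² = s^k (1 - s) ≤ k^k / (k+1)^(k+1)` by Bernoulli's inequality, and these bounds telescope
over `k = 1, …, d-1` to `d^(-d)`. So `g(φ) = d^(-d/2)` forces every factor to be maximal, hence
(Fermat) critical. Since `f_k' = sin^(k-1) t * (k - (k+1) sin² t)`, at a critical point with
`sin t ≠ 0` only the derivative of the second factor survives, giving `f_k'' = -2(k+1) f_k`.
The Hessian of a product of functions of separate variables at a common critical point is diagonal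
with entries `f_i'' ∏_{l ≠ i} f_l`, that is `-2(d-i) g(φ)`.
-/

open Real Set

noncomputable section

/-- The Hessian matrix `[∂²G/∂φ_i∂φ_j]` of a function of the angular variables,
with second derivatives expressed via iterated Fréchet derivatives in the coordinate
directions. -/
def angularHessian {n : ℕ} (G : (Fin n → ℝ) → ℝ) (φ : Fin n → ℝ) :
    Matrix (Fin n) (Fin n) ℝ :=
  Matrix.of fun i j => fderiv ℝ (fun y => fderiv ℝ G y (Pi.single j 1)) φ (Pi.single i 1)

open Finset Function

theorem pow_mul_one_sub_le (k : ℕ) {s : ℝ} (hs : 0 ≤ s) :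
    s ^ k * (1 - s) ≤ k ^ k / (k + 1) ^ (k + 1) := by
  rcases Nat.eq_zero_or_pos k with rfl | hk
  · simpa using hs
  rcases hs.eq_or_lt with rfl | hs
  · rw [zero_pow hk.ne', zero_mul]; positivity
  have hk : (0 : ℝ) < k := by exact_mod_cast hk
  set X := (k + 1) * s with hX
  have hX0 : 0 < X := by positivity
  -- Bernoulli at `a = k / X`, which is sharp exactly at the maximiser `s = k / (k + 1)`
  have bernoulli := one_add_mul_sub_le_pow (a := k / X)
    (by linarith [show 0 ≤ k / X by positivity]) (k + 1)
  rw [div_pow, le_div_iff₀ (by positivity)] at bernoulli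
  rw [le_div_iff₀ (by positivity), ← mul_le_mul_iff_of_pos_left hk]
  calc (k : ℝ) * (s ^ k * (1 - s) * (k + 1) ^ (k + 1))
      = (1 + ((k + 1 : ℕ) : ℝ) * (k / X - 1)) * X ^ (k + 1) := by
        rw [hX, mul_pow]; field_simp; push_cast; ring
    _ ≤ k ^ (k + 1) := bernoulli
    _ = k * k ^ k := pow_succ' _ _

theorem prod_range_pow_self_div (n : ℕ) :
    ∏ k ∈ range n, (k : ℝ) ^ k / (k + 1) ^ (k + 1) = 1 / n ^ n := by
  induction n with
  | zero => simp
  | succ n ih =>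
    rw [prod_range_succ, ih, div_mul_div_comm, one_mul, ← div_div,
      div_self (by exact_mod_cast Nat.pow_self_pos.ne'), Nat.cast_succ]

theorem prod_fin_pow_self_div (d : ℕ) :
    ∏ l : Fin (d - 1),
        ((d - 1 - l : ℕ) : ℝ) ^ (d - 1 - l) / ((d - 1 - l : ℕ) + 1) ^ (d - 1 - l + 1) =
      1 / d ^ d := by
  rcases d with _ | n
  · simp
  show ∏ l : Fin n, ((n - l : ℕ) : ℝ) ^ (n - l) / ((n - l : ℕ) + 1) ^ (n - l + 1) = _
  rw [Fin.prod_univ_eq_prod_range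
      (fun l => ((n - l : ℕ) : ℝ) ^ (n - l) / ((n - l : ℕ) + 1) ^ (n - l + 1)),
    ← prod_range_reflect, ← prod_range_pow_self_div (n + 1), prod_range_succ']
  simp only [CharP.cast_eq_zero, pow_zero, zero_add, pow_one, div_one, mul_one]
  refine prod_congr rfl fun i hi => ?_
  rw [show n - (n - 1 - i) = i + 1 by have := mem_range.1 hi; omega]

theorem prod_fin_natCast_sub (d : ℕ) : ∏ i : Fin (d - 1), ((d : ℝ) - i) = d.factorial := by
  rcases d with _ | n
  · simp
  show ∏ i : Fin n, (((n + 1 : ℕ) : ℝ) - i) = _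
  rw [Fin.prod_univ_eq_prod_range (fun i => ((n + 1 : ℕ) : ℝ) - i), ← prod_range_reflect,
    ← prod_range_add_one_eq_factorial, prod_range_succ', zero_add, mul_one, Nat.cast_prod]
  refine prod_congr rfl fun i hi => ?_
  have := mem_range.1 hi
  rw [Nat.cast_sub (by omega), Nat.cast_sub (by omega)]
  push_cast; ring

theorem abs_det_diagonal_neg_two_mul_sub_div_rpow {d : ℕ} (hd : 1 ≤ d) :
    |(Matrix.diagonal fun i : Fin (d - 1) => -2 * ((d : ℝ) - (i : ℕ)) / d ^ ((d : ℝ) / 2)).det| =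
      2 ^ (d - 1) * d.factorial / d ^ ((d : ℝ) * (d - 1) / 2) := by
  have hd0 : (0 : ℝ) < d := by exact_mod_cast hd
  have habs (i : Fin (d - 1)) : |-2 * ((d : ℝ) - (i : ℕ)) / d ^ ((d : ℝ) / 2)| =
      2 * ((d : ℝ) - (i : ℕ)) / d ^ ((d : ℝ) / 2) := by
    have : ((i : ℕ) : ℝ) < d := by exact_mod_cast (by omega : (i : ℕ) < d)
    rw [abs_div, abs_of_pos (rpow_pos_of_pos hd0 _), abs_mul, abs_neg, abs_two,
      abs_of_pos (by linarith)]
  have hden : ((d : ℝ) ^ ((d : ℝ) / 2)) ^ (d - 1) = d ^ ((d : ℝ) * (d - 1) / 2) := by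
    rw [← rpow_natCast, ← rpow_mul hd0.le, Nat.cast_sub hd]
    ring_nf
  rw [Matrix.det_diagonal, abs_prod, prod_congr rfl fun i _ => habs i, prod_div_distrib,
    prod_mul_distrib, prod_fin_natCast_sub, prod_const, prod_const, card_univ,
    Fintype.card_fin, hden]

theorem eq_of_prod_eq_prod_of_pos_of_le {ι R : Type*} [CommMonoidWithZero R] [PartialOrder R]
    [ZeroLEOneClass R] [PosMulStrictMono R] [Nontrivial R] {s : Finset ι} {f g : ι → R}
    (hf : ∀ i ∈ s, 0 < f i) (hfg : ∀ i ∈ s, f i ≤ g i) (h : ∏ i ∈ s, f i = ∏ i ∈ s, g i) :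
    ∀ i ∈ s, f i = g i := by
  by_contra! ⟨i, hi, hne⟩
  exact (prod_lt_prod hf hfg ⟨i, hi, (hfg i hi).lt_of_ne hne⟩).ne h

theorem prod_update_apply {ι α M : Type*} [Fintype ι] [DecidableEq ι] [CommMonoid M]
    (p : ι → α → M) (j : ι) (q : α → M) (y : ι → α) :
    ∏ l, update p j q l (y l) = q (y j) * ∏ l ∈ univ.erase j, p l (y l) := by
  rw [← mul_prod_erase univ _ (mem_univ j), update_self]
  congr 1
  exact prod_congr rfl fun l hl => by rw [update_of_ne (ne_of_mem_erase hl)]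

theorem fderiv_prod_apply_single {ι : Type*} [Fintype ι] [DecidableEq ι] {p : ι → ℝ → ℝ}
    (hp : ∀ l, Differentiable ℝ (p l)) (y : ι → ℝ) (j : ι) :
    fderiv ℝ (fun z => ∏ l, p l (z l)) y (Pi.single j 1) =
      ∏ l, update p j (deriv (p j)) l (y l) := by
  have hfac (l : ι) : HasFDerivAt (fun z : ι → ℝ => p l (z l))
      (deriv (p l) (y l) • (ContinuousLinearMap.proj l : (ι → ℝ) →L[ℝ] ℝ)) y :=
    (hp l (y l)).hasDerivAt.comp_hasFDerivAt y
      (ContinuousLinearMap.proj l : (ι → ℝ) →L[ℝ] ℝ).hasFDerivAt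
  rw [(HasFDerivAt.finsetProd fun l _ => hfac l).fderiv, prod_update_apply,
    _root_.sum_apply, sum_eq_single j]
  · simp [mul_comm]
  · intro l _ hlj
    simp [hlj]
  · simp

theorem angularHessian_prod_of_deriv_eq_zero {n : ℕ} {p : Fin n → ℝ → ℝ}
    (hp : ∀ l, ContDiff ℝ 2 (p l)) {φ : Fin n → ℝ} (hcrit : ∀ l, deriv (p l) (φ l) = 0) :
    angularHessian (fun z => ∏ l, p l (z l)) φ =
      Matrix.diagonal fun i => deriv (deriv (p i)) (φ i) * ∏ l ∈ univ.erase i, p l (φ l) := by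
  ext i j
  have hp₁ (l : Fin n) : Differentiable ℝ (p l) := (hp l).differentiable two_ne_zero
  have hq (l : Fin n) : Differentiable ℝ (update p j (deriv (p j)) l) := by
    rcases eq_or_ne l j with rfl | h
    · simpa using (hp l).differentiable_deriv_two
    · simpa [h] using hp₁ l
  simp only [angularHessian, Matrix.of_apply, fderiv_prod_apply_single hp₁,
    fderiv_prod_apply_single hq]
  rcases eq_or_ne i j with rfl | hij
  · simp [prod_update_apply]
  · rw [Matrix.diagonal_apply_ne _ hij]
    exact prod_eq_zero (mem_univ j) (by simp [hij.symm, hcrit])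

def sinPowCos (k : ℕ) (t : ℝ) : ℝ := sin t ^ k * cos t

theorem contDiff_sinPowCos (k : ℕ) {n : WithTop ℕ∞} : ContDiff ℝ n (sinPowCos k) := by
  unfold sinPowCos; fun_prop

theorem sinPowCos_sq_le (k : ℕ) (t : ℝ) : sinPowCos k t ^ 2 ≤ k ^ k / (k + 1) ^ (k + 1) := by
  have h : sinPowCos k t ^ 2 = (sin t ^ 2) ^ k * (1 - sin t ^ 2) := by
    rw [sinPowCos, mul_pow, ← pow_mul, ← pow_mul', cos_sq']
  exact h ▸ pow_mul_one_sub_le k (sq_nonneg _)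

theorem sinPowCos_ne_zero_of_sq_eq {k : ℕ} {t : ℝ}
    (h : sinPowCos k t ^ 2 = k ^ k / (k + 1) ^ (k + 1)) : sinPowCos k t ≠ 0 := by
  rintro h0
  rw [h0, zero_pow two_ne_zero] at h
  exact (div_pos (by exact_mod_cast Nat.pow_self_pos) (by positivity)).ne h

theorem deriv_sinPowCos_eq_zero_of_sq_eq {k : ℕ} {t : ℝ}
    (h : sinPowCos k t ^ 2 = k ^ k / (k + 1) ^ (k + 1)) : deriv (sinPowCos k) t = 0 := by
  have hmax : IsLocalMax (fun t => sinPowCos k t ^ 2) t :=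
    IsMaxOn.isLocalMax (fun s _ => h ▸ sinPowCos_sq_le k s) Filter.univ_mem
  have hsq := hmax.hasDerivAt_eq_zero
    (((contDiff_sinPowCos k (n := 1)).differentiable one_ne_zero t).hasDerivAt.fun_pow 2)
  simpa [sinPowCos_ne_zero_of_sq_eq h] using hsq

theorem deriv_sinPowCos {k : ℕ} (hk : 1 ≤ k) :
    deriv (sinPowCos k) = fun t => sin t ^ (k - 1) * (k - (k + 1) * sin t ^ 2) := by
  obtain ⟨m, rfl⟩ : ∃ m, k = m + 1 := ⟨k - 1, by omega⟩
  funext t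
  refine (((hasDerivAt_sin t).fun_pow (m + 1)).mul (hasDerivAt_cos t)).deriv.trans ?_
  push_cast [Nat.add_sub_cancel]
  linear_combination ((m : ℝ) + 1) * sin t ^ m * sin_sq_add_cos_sq t

theorem deriv_deriv_sinPowCos_of_sq_eq {k : ℕ} (hk : 1 ≤ k) {t : ℝ}
    (h : sinPowCos k t ^ 2 = k ^ k / (k + 1) ^ (k + 1)) :
    deriv (deriv (sinPowCos k)) t = -2 * (k + 1) * sinPowCos k t := by
  obtain ⟨m, rfl⟩ : ∃ m, k = m + 1 := ⟨k - 1, by omega⟩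
  have hcrit := deriv_sinPowCos_eq_zero_of_sq_eq h
  have hsin : sin t ≠ 0 := fun h0 => sinPowCos_ne_zero_of_sq_eq h (by simp [sinPowCos, h0])
  rw [deriv_sinPowCos hk, Nat.add_sub_cancel] at hcrit ⊢
  have hu : ((m + 1 : ℕ) : ℝ) - (↑(m + 1) + 1) * sin t ^ 2 = 0 :=
    (mul_eq_zero.1 hcrit).resolve_left (pow_ne_zero m hsin)
  have hd := ((hasDerivAt_sin t).fun_pow m).fun_mul
    ((((hasDerivAt_sin t).fun_pow 2).const_mul ((m + 1 : ℕ) + 1 : ℝ)).const_sub ((m + 1 : ℕ) : ℝ))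
  rw [hd.deriv, hu, sinPowCos]
  push_cast
  ring

theorem sinPowCos_sq_eq_of_prod_eq {d : ℕ} {φ : Fin (d - 1) → ℝ}
    (h : ∏ i : Fin (d - 1), sinPowCos (d - 1 - i) (φ i) = (d : ℝ) ^ (-(d : ℝ) / 2))
    (i : Fin (d - 1)) :
    sinPowCos (d - 1 - i) (φ i) ^ 2 =
      ((d - 1 - i : ℕ) : ℝ) ^ (d - 1 - i) / ((d - 1 - i : ℕ) + 1) ^ (d - 1 - i + 1) := by
  have hd0 : (0 : ℝ) < d := by exact_mod_cast (by have := i.isLt; omega : 0 < d)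
  have hne (l : Fin (d - 1)) : sinPowCos (d - 1 - l) (φ l) ≠ 0 :=
    prod_ne_zero_iff.1 (h ▸ (rpow_pos_of_pos hd0 _).ne') l (Finset.mem_univ l)
  refine eq_of_prod_eq_prod_of_pos_of_le (fun l _ => pow_two_pos_of_ne_zero (hne l))
    (fun l _ => sinPowCos_sq_le _ _) ?_ i (Finset.mem_univ i)
  rw [Finset.prod_pow, h, prod_fin_pow_self_div, ← rpow_natCast, ← rpow_mul hd0.le, one_div,
    ← rpow_natCast, ← rpow_neg hd0.le]
  ring_nf

end

/-- Example 2.1 ii), Hessian computation: for the product function in spherical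
coordinates, `g(φ) = ∏_{i=1}^{d-1} sin^{d-i}(φ_i) cos(φ_i)` (here `i` is `0`-indexed, so
the exponent of `sin (φ i)` is `d - 1 - i`), at every maximizing angle `φ` (where
`g(φ) = d^{-d/2}`) one has `∂²g/∂φ_i² = -2(d-i+1)/d^{d/2}` (0-indexed: `-2(d-i)/d^{d/2}`),
`∂²g/∂φ_i∂φ_j = 0` for `i ≠ j`, and `|det g''(φ)| = 2^{d-1} d! / d^{d(d-1)/2} > 0`. -/
theorem product_spherical_hessian (d : ℕ) (hd : 1 ≤ d)
    (G : (Fin (d - 1) → ℝ) → ℝ)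
    (hG : ∀ φ, G φ = ∏ i : Fin (d - 1), Real.sin (φ i) ^ (d - 1 - (i : ℕ)) * Real.cos (φ i))
    (φ : Fin (d - 1) → ℝ) (hφ : G φ = (d : ℝ) ^ (-(d : ℝ) / 2)) :
    (∀ i : Fin (d - 1), angularHessian G φ i i =
        -2 * ((d : ℝ) - ((i : ℕ) : ℝ)) / (d : ℝ) ^ ((d : ℝ) / 2)) ∧
    (∀ i j : Fin (d - 1), i ≠ j → angularHessian G φ i j = 0) ∧
    |(angularHessian G φ).det| =
      2 ^ (d - 1) * (Nat.factorial d : ℝ) / (d : ℝ) ^ ((d : ℝ) * ((d : ℝ) - 1) / 2) ∧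
    (0 : ℝ) < 2 ^ (d - 1) * (Nat.factorial d : ℝ) / (d : ℝ) ^ ((d : ℝ) * ((d : ℝ) - 1) / 2) := by
  have hd0 : (0 : ℝ) < d := by exact_mod_cast hd
  obtain rfl : G = fun z => ∏ i : Fin (d - 1), sinPowCos (d - 1 - i) (z i) := funext hG
  beta_reduce at hφ
  have hmax := sinPowCos_sq_eq_of_prod_eq hφ
  have hH : angularHessian (fun z => ∏ i : Fin (d - 1), sinPowCos (d - 1 - i) (z i)) φ =
      Matrix.diagonal fun i : Fin (d - 1) => -2 * ((d : ℝ) - (i : ℕ)) / d ^ ((d : ℝ) / 2) := by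
    rw [angularHessian_prod_of_deriv_eq_zero (fun _ => contDiff_sinPowCos _)
      fun i => deriv_sinPowCos_eq_zero_of_sq_eq (hmax i)]
    congr 1
    funext i
    rw [deriv_deriv_sinPowCos_of_sq_eq (by omega) (hmax i), mul_assoc,
      Finset.mul_prod_erase _ (fun l : Fin (d - 1) => sinPowCos (d - 1 - l) (φ l))
        (Finset.mem_univ i),
      hφ, neg_div, rpow_neg hd0.le, Nat.sub_sub, Nat.cast_sub (by omega)]
    push_cast
    ring
  exact ⟨fun i => by simp [hH], fun i j hij => by simp [hH, hij],
    by rw [hH, abs_det_diagonal_neg_two_mul_sub_div_rpow hd],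
    div_pos (by positivity) (rpow_pos_of_pos hd0 _)⟩
end

section
/- Suppose the common correlation function satisfies r(s,t) = 1 − a|t−s|^α + o(|t−s|^α) as s,t → t₀ with a > 0 and α ∈ (0,2]. Then there exist θ > 0 and a constant C such that for all s, t ∈ [t₀−θ, t₀+θ] ∩ [0,T] and all unit vectors z, z' ∈ S^{d−1}: E[ ( ⟨X̄(t), z⟩ − ⟨X̄(s), z'⟩ )² ] ≤ C·( |s−t|^α + Σ_{i=1}^d |z_i − z'_i|^α ), while E[ ⟨X̄(t), z⟩² ] = 1. -/
/-! Once `r(u,u) = 1`, the second moment of `⟨X̄(t),z⟩ - ⟨X̄(s),z'⟩` for unit vectors `z, z'` is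
`2 - (r(s,t) + r(t,s))⟨z,z'⟩ = |z - z'|² + (2 - r(s,t) - r(t,s))⟨z,z'⟩`. Since `|zᵢ - z'ᵢ| ≤ 2`
and `α ≤ 2`, the first term is at most `2^(2-α) Σᵢ |zᵢ - z'ᵢ|^α`; by Cauchy–Schwarz the second is
at most `|2 - r(s,t) - r(t,s)|`, which the local expansion of `r` bounds by a multiple of
`|s - t|^α`. The same expansion at `s = t` gives `r(u,u) = 1` because `α > 0`. -/

open MeasureTheory ProbabilityTheory Filter Set Real Asymptotics
open scoped ENNReal NNReal Topology RealInnerProductSpace Classical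

noncomputable section

/-- The kernel of the Hessian bilinear form of `f` at `e`, restricted to the tangent
space of the unit sphere at `e` (i.e. the orthogonal complement of `e`).  The spherical
Hessian `g''(φ)` of the paper is non-singular iff this kernel is trivial, and has rank
`d-1-m` iff this kernel has dimension `m`. -/
def hessKer {d : ℕ} (f : EuclideanSpace ℝ (Fin d) → ℝ) (e : EuclideanSpace ℝ (Fin d)) :
    Submodule ℝ (EuclideanSpace ℝ (Fin d)) :=
  (Submodule.span ℝ {e})ᗮ ⊓
    ⨅ w ∈ (Submodule.span ℝ {e})ᗮ, LinearMap.ker (((fderiv ℝ (fderiv ℝ f) e).flip w : EuclideanSpace ℝ (Fin d) →L[ℝ] ℝ) :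
      EuclideanSpace ℝ (Fin d) →ₗ[ℝ] ℝ)

/-- Condition 2.1 of the paper: `g` is a non-negative continuous function, positively
homogeneous of order `p`, not identically zero, normalized so that its maximum over the
unit sphere is `1`; the radial extension `x ↦ g(x/‖x‖)` is twice continuously
differentiable on a conic neighbourhood `{g > 1-ε}` of the maximizer set
`M = {e ∈ S^{d-1} : g e = 1}`, and either (i) `m = 0`, `M` is finite and the spherical
Hessian is non-singular on the neighbourhood, or (ii) `1 ≤ m ≤ d-2` and the spherical
Hessian has rank `d-1-m` (kernel of dimension `m`) on the neighbourhood. -/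
structure ChaosCondition (d : ℕ) (p : ℝ) (m : ℕ) (g : EuclideanSpace ℝ (Fin d) → ℝ) : Prop where
  nonneg : ∀ x, 0 ≤ g x
  contin : Continuous g
  homog : ∀ cc : ℝ, 0 < cc → ∀ x, g (cc • x) = cc ^ p * g x
  nontriv : ∃ x, 0 < g x
  normalized : IsGreatest (g '' Metric.sphere 0 1) 1
  structure_cases : ∃ ε, 0 < ε ∧ ε < 1 ∧
    ContDiffOn ℝ 2 (fun x => g (‖x‖⁻¹ • x)) {x | x ≠ 0 ∧ 1 - ε < g (‖x‖⁻¹ • x)} ∧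
    ((m = 0 ∧ {e ∈ Metric.sphere (0 : EuclideanSpace ℝ (Fin d)) 1 | g e = 1}.Finite ∧
        ∀ e ∈ Metric.sphere (0 : EuclideanSpace ℝ (Fin d)) 1, 1 - ε < g e →
          hessKer (fun x => g (‖x‖⁻¹ • x)) e = ⊥) ∨
      (1 ≤ m ∧ m ≤ d - 2 ∧
        ∀ e ∈ Metric.sphere (0 : EuclideanSpace ℝ (Fin d)) 1, 1 - ε < g e →
          Module.finrank ℝ (hessKer (fun x => g (‖x‖⁻¹ • x)) e) = m))

/-- `X` is a centred `d`-dimensional Gaussian vector process with continuous sample paths,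
whose coordinates are independent and identically distributed centred Gaussian processes
with standard deviation function `σ` and correlation function `r`:  every finite linear
combination of coordinate values is a centred Gaussian random variable whose variance is
computed from `Cov(Xᵢ(s), Xᵢ(t)) = σ(s)σ(t)r(s,t)` and the independence of coordinates. -/
def IsGaussianVP {Ω : Type*} [MeasurableSpace Ω] (P : Measure Ω) {d : ℕ}
    (X : ℝ → Ω → EuclideanSpace ℝ (Fin d)) (σ : ℝ → ℝ) (r : ℝ → ℝ → ℝ) : Prop :=
  (∀ ω, Continuous fun t => X t ω) ∧
  (∀ t i, Measurable fun ω => X t ω i) ∧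
  ∀ (n : ℕ) (t : Fin n → ℝ) (cc : Fin d → Fin n → ℝ),
    Measure.map (fun ω => ∑ i, ∑ j, cc i j * X (t j) ω i) P =
      gaussianReal 0
        (∑ i, ∑ j, ∑ j', cc i j * cc i j' * (σ (t j) * σ (t j') * r (t j) (t j'))).toNNReal

/-- `B` is a standard fractional Brownian motion with Hurst index `α/2`, i.e. a centred
Gaussian process with continuous sample paths and covariance
`Cov(B_s, B_t) = (|s|^α + |t|^α - |s-t|^α)/2`. -/
def IsFBM {Ω : Type*} [MeasurableSpace Ω] (Q : Measure Ω) (α : ℝ) (B : ℝ → Ω → ℝ) : Prop :=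
  (∀ ω, Continuous fun t => B t ω) ∧ (∀ t, Measurable (B t)) ∧
  ∀ (n : ℕ) (t : Fin n → ℝ) (cc : Fin n → ℝ),
    Measure.map (fun ω => ∑ j, cc j * B (t j) ω) Q =
      gaussianReal 0
        (∑ j, ∑ j', cc j * cc j' * ((|t j| ^ α + |t j'| ^ α - |t j - t j'| ^ α) / 2)).toNNReal

/-- The generalized Piterbarg functional
`𝒫^f_{α,a}(E) = E[sup_{t∈E} exp(√(2a) B_α(t) - a|t|^α - f(t))]`, expressed through a
fractional Brownian motion `B` on a probability space `(Ω', Q)`.  With `a = 1` and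
`f = 0` it is the Pickands functional `H_α(E) = E[sup_{t∈E} exp(√2 B_α(t) - |t|^α)]`. -/
def piterbargFn {Ω : Type*} [MeasurableSpace Ω] (Q : Measure Ω) (B : ℝ → Ω → ℝ)
    (a α : ℝ) (f : ℝ → ℝ) (E : Set ℝ) : ℝ :=
  ∫ ω, (⨆ t : E, Real.exp (Real.sqrt (2 * a) * B (t : ℝ) ω - a * |(t : ℝ)| ^ α - f (t : ℝ))) ∂Q

lemma ProbabilityTheory.HasLaw.integral_sq_of_gaussianReal {Ω : Type*} [MeasurableSpace Ω]
    {P : Measure Ω} {Y : Ω → ℝ} {v : ℝ≥0} (hY : HasLaw Y (gaussianReal 0 v) P) :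
    ∫ ω, Y ω ^ 2 ∂P = v := by
  have hmean : P[Y] = 0 := by rw [hY.integral_eq, integral_id_gaussianReal]
  rw [← variance_of_integral_eq_zero hY.aemeasurable hmean, hY.variance_eq,
    variance_id_gaussianReal]

namespace IsGaussianVP

variable {Ω : Type*} [MeasurableSpace Ω] {P : Measure Ω} {d : ℕ}
  {X : ℝ → Ω → EuclideanSpace ℝ (Fin d)} {σ : ℝ → ℝ} {r : ℝ → ℝ → ℝ}

lemma integral_sq_sum (hX : IsGaussianVP P X σ r) {n : ℕ} (t : Fin n → ℝ)
    (c : Fin d → Fin n → ℝ) :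
    ∫ ω, (∑ i, ∑ j, c i j * X (t j) ω i) ^ 2 ∂P =
      max (∑ i, ∑ j, ∑ j', c i j * c i j' * (σ (t j) * σ (t j') * r (t j) (t j'))) 0 := by
  have hmeas : Measurable fun ω => ∑ i, ∑ j, c i j * X (t j) ω i :=
    Finset.measurable_sum _ fun i _ => Finset.measurable_sum _ fun j _ =>
      (hX.2.1 (t j) i).const_mul _
  rw [HasLaw.integral_sq_of_gaussianReal ⟨hmeas.aemeasurable, hX.2.2 n t c⟩,
    Real.coe_toNNReal']

lemma integral_sq_standardized_sub (hX : IsGaussianVP P X σ r) {s t : ℝ} (hs : σ s ≠ 0)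
    (ht : σ t ≠ 0) (z z' : Fin d → ℝ) :
    ∫ ω, ((∑ i, X t ω i / σ t * z i) - ∑ i, X s ω i / σ s * z' i) ^ 2 ∂P =
      max (r t t * ∑ i, z i ^ 2 + r s s * ∑ i, z' i ^ 2 -
        (r s t + r t s) * ∑ i, z i * z' i) 0 := by
  convert hX.integral_sq_sum ![t, s] (fun i => ![z i / σ t, -(z' i / σ s)]) using 3
  · simp only [Fin.sum_univ_two, Matrix.cons_val_zero, Matrix.cons_val_one,
      ← Finset.sum_sub_distrib]
    congr 1
    refine Finset.sum_congr rfl fun i _ => ?_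
    ring
  · simp only [Fin.sum_univ_two, Matrix.cons_val_zero, Matrix.cons_val_one, Finset.mul_sum,
      ← Finset.sum_add_distrib, ← Finset.sum_sub_distrib]
    refine Finset.sum_congr rfl fun i _ => ?_
    field_simp
    ring

lemma integral_sq_standardized (hX : IsGaussianVP P X σ r) {t : ℝ} (ht : σ t ≠ 0)
    (z : Fin d → ℝ) :
    ∫ ω, (∑ i, X t ω i / σ t * z i) ^ 2 ∂P = max (r t t * ∑ i, z i ^ 2) 0 := by
  simpa using hX.integral_sq_standardized_sub ht ht z 0

end IsGaussianVP

lemma exists_abs_sub_one_le_of_isLittleO {r : ℝ → ℝ → ℝ} {t₀ a α : ℝ}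
    (hr : (fun q : ℝ × ℝ => r q.1 q.2 - (1 - a * |q.1 - q.2| ^ α))
      =o[𝓝 (t₀, t₀)] fun q : ℝ × ℝ => |q.1 - q.2| ^ α) :
    ∃ θ > 0, ∀ u ∈ Icc (t₀ - θ) (t₀ + θ), ∀ w ∈ Icc (t₀ - θ) (t₀ + θ),
      |r u w - 1| ≤ (|a| + 1) * |u - w| ^ α := by
  obtain ⟨θ, hθ, hball⟩ := Metric.nhds_basis_closedBall.eventually_iff.1 (hr.bound one_pos)
  refine ⟨θ, hθ, fun u hu w hw => ?_⟩
  have h := @hball (u, w) (by rw [← closedBall_prod_same, Real.closedBall_eq_Icc]; exact ⟨hu, hw⟩)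
  simp only [Real.norm_eq_abs, one_mul, abs_of_nonneg (rpow_nonneg (abs_nonneg (u - w)) α)] at h
  calc |r u w - 1| = |(r u w - (1 - a * |u - w| ^ α)) - a * |u - w| ^ α| := by ring_nf
    _ ≤ |r u w - (1 - a * |u - w| ^ α)| + |a * |u - w| ^ α| := abs_sub _ _
    _ ≤ (|a| + 1) * |u - w| ^ α := by
      rw [abs_mul, abs_of_nonneg (rpow_nonneg (abs_nonneg (u - w)) α)]
      linarith

lemma sq_le_rpow_mul_abs_rpow {α c x : ℝ} (hα : α ≤ 2) (hx : |x| ≤ c) :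
    x ^ 2 ≤ c ^ (2 - α) * |x| ^ α := by
  rcases (abs_nonneg x).eq_or_lt with h0 | h0
  · rw [abs_eq_zero.1 h0.symm, sq, zero_mul]
    exact mul_nonneg (rpow_nonneg ((abs_nonneg x).trans hx) _) (rpow_nonneg (abs_nonneg _) _)
  calc x ^ 2 = |x| ^ (2 - α) * |x| ^ α := by
        rw [← rpow_add h0, sub_add_cancel, rpow_two, sq_abs]
    _ ≤ c ^ (2 - α) * |x| ^ α := by gcongr

lemma two_sub_mul_sum_mul_le {ι : Type*} [Fintype ι] {α : ℝ} (hα : α ≤ 2) {z z' : ι → ℝ}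
    (hz : ∑ i, z i ^ 2 = 1) (hz' : ∑ i, z' i ^ 2 = 1) (ρ : ℝ) :
    2 - ρ * ∑ i, z i * z' i ≤ 2 ^ (2 - α) * ∑ i, |z i - z' i| ^ α + |2 - ρ| := by
  set S := ∑ i, z i * z' i
  have hS : |S| ≤ 1 := by
    refine abs_le_of_sq_le_sq ?_ zero_le_one
    simpa [hz, hz'] using Finset.sum_mul_sq_le_sq_mul_sq Finset.univ z z'
  have hdist : ∑ i, (z i - z' i) ^ 2 = 2 - 2 * S := by
    simp only [sub_sq, Finset.sum_add_distrib, Finset.sum_sub_distrib, hz, hz', S,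
      Finset.mul_sum, mul_assoc]
    ring
  have hcoord : ∀ i, |z i - z' i| ≤ 2 := fun i => by
    refine abs_le_of_sq_le_sq ?_ zero_le_two
    calc (z i - z' i) ^ 2 ≤ ∑ j, (z j - z' j) ^ 2 :=
          Finset.single_le_sum (fun j _ => sq_nonneg (z j - z' j)) (Finset.mem_univ i)
      _ ≤ 2 ^ 2 := by rw [hdist]; linarith [(abs_le.1 hS).1]
  have hcross : (2 - ρ) * S ≤ |2 - ρ| :=
    (le_abs_self _).trans (by rw [abs_mul]; exact mul_le_of_le_one_right (abs_nonneg _) hS)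
  calc 2 - ρ * S = ∑ i, (z i - z' i) ^ 2 + (2 - ρ) * S := by rw [hdist]; ring
    _ ≤ 2 ^ (2 - α) * ∑ i, |z i - z' i| ^ α + |2 - ρ| := by
      refine add_le_add ?_ hcross
      rw [Finset.mul_sum]
      exact Finset.sum_le_sum fun i _ => sq_le_rpow_mul_abs_rpow hα (hcoord i)

theorem standardized_field_increment_bound_general
    {Ω : Type*} [MeasurableSpace Ω] (P : Measure Ω)
    {d : ℕ} (T t₀ a α : ℝ) (σ : ℝ → ℝ) (r : ℝ → ℝ → ℝ)
    (X : ℝ → Ω → EuclideanSpace ℝ (Fin d))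
    (hα : 0 < α) (hα2 : α ≤ 2)
    (hX : IsGaussianVP P X σ r)
    (hσpos : ∀ t ∈ Icc 0 T, 0 < σ t)
    (hras : (fun q : ℝ × ℝ => r q.1 q.2 - (1 - a * |q.1 - q.2| ^ α))
              =o[𝓝 (t₀, t₀)] fun q : ℝ × ℝ => |q.1 - q.2| ^ α) :
    ∃ θ > (0 : ℝ), ∃ C : ℝ,
      ∀ s ∈ Icc 0 T ∩ Icc (t₀ - θ) (t₀ + θ), ∀ t ∈ Icc 0 T ∩ Icc (t₀ - θ) (t₀ + θ),
        ∀ z z' : Fin d → ℝ, (∑ i, z i ^ 2 = 1) → (∑ i, z' i ^ 2 = 1) →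
          (∫ ω, ((∑ i, X t ω i / σ t * z i) - ∑ i, X s ω i / σ s * z' i) ^ 2 ∂P ≤
            C * (|s - t| ^ α + ∑ i, |z i - z' i| ^ α)) ∧
          ∫ ω, (∑ i, X t ω i / σ t * z i) ^ 2 ∂P = 1 := by
  obtain ⟨θ, hθ, hr⟩ := exists_abs_sub_one_le_of_isLittleO hras
  have hr_diag : ∀ u ∈ Icc (t₀ - θ) (t₀ + θ), r u u = 1 := fun u hu => by
    simpa [zero_rpow hα.ne', sub_eq_zero] using hr u hu u hu
  refine ⟨θ, hθ, 2 ^ (2 - α) + 2 * (|a| + 1), ?_⟩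
  rintro s ⟨hsT, hs⟩ t ⟨htT, ht⟩ z z' hz hz'
  rw [hX.integral_sq_standardized_sub (hσpos s hsT).ne' (hσpos t htT).ne',
    hX.integral_sq_standardized (hσpos t htT).ne', hr_diag s hs, hr_diag t ht, hz, hz']
  refine ⟨max_le ?_ (by positivity), by simp⟩
  have hρ : |2 - (r s t + r t s)| ≤ 2 * (|a| + 1) * |s - t| ^ α := by
    have hst := hr s hs t ht
    have hts := hr t ht s hs
    rw [abs_sub_comm t s] at hts
    calc |2 - (r s t + r t s)| = |(r s t - 1) + (r t s - 1)| := by rw [← abs_neg]; ring_nf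
      _ ≤ |r s t - 1| + |r t s - 1| := abs_add_le _ _
      _ ≤ 2 * (|a| + 1) * |s - t| ^ α := by linarith
  have hinc := two_sub_mul_sum_mul_le hα2 hz hz' (r s t + r t s)
  have hh : 0 ≤ |s - t| ^ α := by positivity
  have hSa : 0 ≤ ∑ i, |z i - z' i| ^ α := by positivity
  have h2 : 0 ≤ (2 : ℝ) ^ (2 - α) := by positivity
  nlinarith [mul_nonneg h2 hh, mul_nonneg (by positivity : (0:ℝ) ≤ 2 * (|a| + 1)) hSa]

/-- Increment bound in the proof of Theorem 2.1: near `t₀` the standardized field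
`(t,z) ↦ ⟨X̄(t),z⟩` has unit variance and its increments satisfy
`E[(⟨X̄(t),z⟩ - ⟨X̄(s),z'⟩)²] ≤ C(|s-t|^α + Σᵢ|zᵢ-z'ᵢ|^α)`. -/
theorem standardized_field_increment_bound
    {Ω : Type*} [MeasurableSpace Ω] (P : Measure Ω) [IsProbabilityMeasure P]
    {d : ℕ} (hd : 1 ≤ d) (T t₀ a α : ℝ) (σ : ℝ → ℝ) (r : ℝ → ℝ → ℝ)
    (X : ℝ → Ω → EuclideanSpace ℝ (Fin d))
    (hT : 0 < T) (ht₀ : t₀ ∈ Icc 0 T) (ha : 0 < a) (hα : 0 < α) (hα2 : α ≤ 2)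
    (hX : IsGaussianVP P X σ r)
    (hσpos : ∀ t ∈ Icc 0 T, 0 < σ t)
    (hras : (fun q : ℝ × ℝ => r q.1 q.2 - (1 - a * |q.1 - q.2| ^ α))
              =o[𝓝 (t₀, t₀)] fun q : ℝ × ℝ => |q.1 - q.2| ^ α) :
    ∃ θ > (0 : ℝ), ∃ C : ℝ,
      ∀ s ∈ Icc 0 T ∩ Icc (t₀ - θ) (t₀ + θ), ∀ t ∈ Icc 0 T ∩ Icc (t₀ - θ) (t₀ + θ),
        ∀ z z' : Fin d → ℝ, (∑ i, z i ^ 2 = 1) → (∑ i, z' i ^ 2 = 1) →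
          (∫ ω, ((∑ i, X t ω i / σ t * z i) - ∑ i, X s ω i / σ s * z' i) ^ 2 ∂P ≤
            C * (|s - t| ^ α + ∑ i, |z i - z' i| ^ α)) ∧
          ∫ ω, (∑ i, X t ω i / σ t * z i) ^ 2 ∂P = 1 :=
  standardized_field_increment_bound_general P T t₀ a α σ r X hα hα2 hX hσpos hras
end
end
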